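/- Let Σ_Y = Y_1 + ... + Y_m and Σ_N = N_1 + ... + N_m where (Y_i, N_i) are i.i.d. pairs of nonnegative-integer-valued random variables. Define (Y', N') := (Σ_Y − 1, Σ_N) if Σ_Y ≥ 1 and (0, 0) if Σ_Y = 0. Then for all s > 0 (with 0^0 := 1) and t ≥ 0: E(s^{Y'} t^{N'}) = (1/s)·E(s^{Y_1} t^{N_1})^m − (1/s)·E(t^{N_1} 1_{Y_1 = 0})^m + P(Y_1 = 0)^m, whenever the expectations are finite. -/

import Mathlib

open scoped ENNReal

/-- Law of the componentwise sum of `n` i.i.d. copies of a pair-valued `PMF`. -/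
noncomputable def sumIID2 (p : PMF (ℕ × ℕ)) : ℕ → PMF (ℕ × ℕ)
  | 0 => PMF.pure (0, 0)
  | (k+1) => (sumIID2 p k).bind (fun s => p.map (fun a => (a.1 + s.1, a.2 + s.2)))

/-- One step of the joint recursion:
`(Y', N') = (Σ_Y − 1, Σ_N)` if `Σ_Y ≥ 1` and `(0, 0)` if `Σ_Y = 0`. -/
noncomputable def jointStep (m : ℕ) (p : PMF (ℕ × ℕ)) : PMF (ℕ × ℕ) :=
  (sumIID2 p m).map (fun z => if z.1 = 0 then (0, 0) else (z.1 - 1, z.2))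

/-!
Generating functions are taken valued in `ℝ≥0∞`, where every sum is defined and can be
rearranged freely. The generating function of an `m`-fold i.i.d. sum is the `m`-th power of
that of one summand. For `w = (y, n)`, `s · s ^ (y - 1) = s ^ y` when `y ≥ 1`, and for `y = 0`
both sides below pick up `s + t ^ n`; hence, with `G`, `A`, `B` the generating functions at
`(s, t)`, `(0, t)`, `(0, 1)` and `E` that of `(Y', N')`,
`s · E + A ^ m = s · B ^ m + G ^ m`,
an identity without subtraction. Summability makes `G` finite, hence all four terms finite,
and the identity passes to `ℝ`.
-/

namespace PMF

variable {α β : Type*}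

theorem tsum_pure_mul (a : α) (h : α → ℝ≥0∞) : ∑' z, PMF.pure a z * h z = h a := by
  rw [tsum_eq_single a fun z hz => by simp [hz], pure_apply_self, one_mul]

theorem tsum_bind_mul (q : PMF α) (f : α → PMF β) (h : β → ℝ≥0∞) :
    ∑' z, q.bind f z * h z = ∑' w, q w * ∑' z, f w z * h z := by
  simp only [bind_apply, ← ENNReal.tsum_mul_right, ← ENNReal.tsum_mul_left, mul_assoc]
  exact ENNReal.tsum_comm

theorem tsum_map_mul (q : PMF α) (g : α → β) (h : β → ℝ≥0∞) :
    ∑' z, q.map g z * h z = ∑' w, q w * h (g w) := by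
  simp only [← bind_pure_comp, tsum_bind_mul, Function.comp_apply, tsum_pure_mul]

noncomputable def pgf (q : PMF (ℕ × ℕ)) (a b : ℝ≥0∞) : ℝ≥0∞ :=
  ∑' z, q z * (a ^ z.1 * b ^ z.2)

theorem pgf_mono (q : PMF (ℕ × ℕ)) {a a' b b' : ℝ≥0∞} (ha : a ≤ a') (hb : b ≤ b') :
    q.pgf a b ≤ q.pgf a' b' :=
  ENNReal.tsum_le_tsum fun _ => by gcongr

theorem pgf_one_one (q : PMF (ℕ × ℕ)) : q.pgf 1 1 = 1 := by
  simp [pgf]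

theorem pgf_map_add_const (q : PMF (ℕ × ℕ)) (w : ℕ × ℕ) (a b : ℝ≥0∞) :
    (q.map fun z => (z.1 + w.1, z.2 + w.2)).pgf a b = a ^ w.1 * b ^ w.2 * q.pgf a b := by
  simp only [pgf, tsum_map_mul, ← ENNReal.tsum_mul_left, pow_add]
  exact tsum_congr fun _ => by ring

theorem mul_pgf_map_predFst_add (q : PMF (ℕ × ℕ)) (a b : ℝ≥0∞) :
    a * (q.map fun z => if z.1 = 0 then (0, 0) else (z.1 - 1, z.2)).pgf a b + q.pgf 0 b
      = a * q.pgf 0 1 + q.pgf a b := by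
  simp only [pgf, tsum_map_mul, ← ENNReal.tsum_mul_left, ← ENNReal.tsum_add]
  refine tsum_congr fun ⟨y, n⟩ => ?_
  cases y with
  | zero => simp
  | succ y => simp [pow_succ]; ring

theorem toReal_pgf_ofReal (q : PMF (ℕ × ℕ)) {a b : ℝ} (ha : 0 ≤ a) (hb : 0 ≤ b) :
    (q.pgf (ENNReal.ofReal a) (ENNReal.ofReal b)).toReal
      = ∑' z, (q z).toReal * a ^ z.1 * b ^ z.2 := by
  rw [pgf, ENNReal.tsum_toReal_eq fun z => ENNReal.mul_ne_top (q.apply_ne_top z) (by finiteness)]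
  refine tsum_congr fun z => ?_
  simp [ENNReal.toReal_mul, ENNReal.toReal_ofReal ha, ENNReal.toReal_ofReal hb, mul_assoc]

theorem pgf_ofReal_ne_top (q : PMF (ℕ × ℕ)) {a b : ℝ} (ha : 0 ≤ a) (hb : 0 ≤ b)
    (hsum : Summable fun z : ℕ × ℕ => (q z).toReal * a ^ z.1 * b ^ z.2) :
    q.pgf (ENNReal.ofReal a) (ENNReal.ofReal b) ≠ ⊤ := by
  have h : q.pgf (ENNReal.ofReal a) (ENNReal.ofReal b)
      = ENNReal.ofReal (∑' z : ℕ × ℕ, (q z).toReal * a ^ z.1 * b ^ z.2) := by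
    rw [ENNReal.ofReal_tsum_of_nonneg (fun z => by positivity) hsum, pgf]
    refine tsum_congr fun z => ?_
    rw [ENNReal.ofReal_mul (by positivity), ENNReal.ofReal_mul (by positivity),
      ENNReal.ofReal_toReal (q.apply_ne_top z), ENNReal.ofReal_pow ha, ENNReal.ofReal_pow hb,
      mul_assoc]
  exact h ▸ ENNReal.ofReal_ne_top

theorem tsum_ite_fst_eq_zero_eq_toReal_pgf (q : PMF (ℕ × ℕ)) {b : ℝ} (hb : 0 ≤ b) :
    (∑' z : ℕ × ℕ, if z.1 = 0 then (q z).toReal * b ^ z.2 else 0)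
      = (q.pgf 0 (ENNReal.ofReal b)).toReal := by
  rw [← ENNReal.ofReal_zero, toReal_pgf_ofReal q le_rfl hb]
  refine tsum_congr fun z => ?_
  split_ifs with h <;> simp [h]

end PMF

theorem pgf_sumIID2 (p : PMF (ℕ × ℕ)) (a b : ℝ≥0∞) :
    ∀ k, (sumIID2 p k).pgf a b = p.pgf a b ^ k
  | 0 => by simp [PMF.pgf, sumIID2]
  | k + 1 =>
    calc (sumIID2 p (k + 1)).pgf a b
        = ∑' w, sumIID2 p k w * (p.map fun z => (z.1 + w.1, z.2 + w.2)).pgf a b :=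
          PMF.tsum_bind_mul _ _ _
      _ = (∑' w, sumIID2 p k w * (a ^ w.1 * b ^ w.2)) * p.pgf a b := by
          simp only [PMF.pgf_map_add_const, ← mul_assoc, ENNReal.tsum_mul_right]
      _ = p.pgf a b ^ (k + 1) := by
          rw [← PMF.pgf, pgf_sumIID2 p a b k, pow_succ]

theorem mul_pgf_jointStep_add (m : ℕ) (p : PMF (ℕ × ℕ)) (a b : ℝ≥0∞) :
    a * (jointStep m p).pgf a b + p.pgf 0 b ^ m = a * p.pgf 0 1 ^ m + p.pgf a b ^ m := by
  simp only [← pgf_sumIID2]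
  exact (sumIID2 p m).mul_pgf_map_predFst_add a b

theorem stmt14_general (m : ℕ) (p : PMF (ℕ × ℕ)) (s t : ℝ)
    (hs : 0 < s) (ht : 0 ≤ t)
    (hsum : Summable fun z : ℕ × ℕ => (p z).toReal * s ^ z.1 * t ^ z.2) :
    (∑' z : ℕ × ℕ, ((jointStep m p) z).toReal * s ^ z.1 * t ^ z.2)
      = (1 / s) * (∑' z : ℕ × ℕ, (p z).toReal * s ^ z.1 * t ^ z.2) ^ m
        - (1 / s) * (∑' z : ℕ × ℕ, if z.1 = 0 then (p z).toReal * t ^ z.2 else 0) ^ m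
        + (∑' z : ℕ × ℕ, if z.1 = 0 then (p z).toReal else 0) ^ m := by
  set S := ENNReal.ofReal s
  set T := ENNReal.ofReal t
  have hG : p.pgf S T ≠ ⊤ := p.pgf_ofReal_ne_top hs.le ht hsum
  have hA : p.pgf 0 T ≠ ⊤ := ne_top_of_le_ne_top hG (p.pgf_mono bot_le le_rfl)
  have hB : p.pgf 0 1 ≠ ⊤ := ne_top_of_le_ne_top ENNReal.one_ne_top
    ((p.pgf_mono zero_le_one le_rfl).trans_eq p.pgf_one_one)
  have key := mul_pgf_jointStep_add m p S T
  have hE : (jointStep m p).pgf S T ≠ ⊤ := by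
    have hSE : S * (jointStep m p).pgf S T ≠ ⊤ :=
      ne_top_of_le_ne_top (by finiteness) (key ▸ le_self_add)
    exact fun h => hSE (by rw [h, ENNReal.mul_top (ENNReal.ofReal_pos.2 hs).ne'])
  have keyR := congrArg ENNReal.toReal key
  rw [ENNReal.toReal_add (by finiteness) (by finiteness),
    ENNReal.toReal_add (by finiteness) (by finiteness)] at keyR
  simp only [ENNReal.toReal_mul, ENNReal.toReal_pow, S, ENNReal.toReal_ofReal hs.le] at keyR
  have hB_toReal := p.tsum_ite_fst_eq_zero_eq_toReal_pgf zero_le_one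
  simp only [one_pow, mul_one, ENNReal.ofReal_one] at hB_toReal
  rw [← p.toReal_pgf_ofReal hs.le ht, ← (jointStep m p).toReal_pgf_ofReal hs.le ht,
    p.tsum_ite_fst_eq_zero_eq_toReal_pgf ht, hB_toReal]
  field_simp
  linarith

theorem stmt14 (m : ℕ) (hm : 2 ≤ m) (p : PMF (ℕ × ℕ)) (s t : ℝ)
    (hs : 0 < s) (ht : 0 ≤ t)
    (hsum : Summable fun z : ℕ × ℕ => (p z).toReal * s ^ z.1 * t ^ z.2) :
    (∑' z : ℕ × ℕ, ((jointStep m p) z).toReal * s ^ z.1 * t ^ z.2)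
      = (1 / s) * (∑' z : ℕ × ℕ, (p z).toReal * s ^ z.1 * t ^ z.2) ^ m
        - (1 / s) * (∑' z : ℕ × ℕ, if z.1 = 0 then (p z).toReal * t ^ z.2 else 0) ^ m
        + (∑' z : ℕ × ℕ, if z.1 = 0 then (p z).toReal else 0) ^ m :=
  stmt14_general m p s t hs ht hsum
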